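/- For every λ ∈ ℤ^N and every 1 ≤ t ≤ N: t is good for λ (with respect to the parity sequence p̄) if and only if w₀(t) is cogood for s̃(λ) (with respect to the opposite parity sequence p̄′). -/

import Mathlib

namespace Kujawa

open Finset

variable {n : ℕ}

/-- The sign `(−1)^{p̄ i}` attached to the parity sequence `pb`. -/
def sg (pb : Fin (n + 1) → ZMod 2) (i : Fin (n + 1)) : ℤ :=
  if pb i = 0 then 1 else -1

/-- `ϑ_j = ∑_{i > j} (−1)^{p̄_i + p̄_j}`. -/
def theta (pb : Fin (n + 1) → ZMod 2) (j : Fin (n + 1)) : ℤ :=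
  ∑ i ∈ Finset.Ioi j, sg pb i * sg pb j

/-- The standard basis vector `ε_i` of `X(T) = ℤ^N`. -/
def eps (i : Fin (n + 1)) : Fin (n + 1) → ℤ := fun j => if j = i then 1 else 0

/-- The `j`-th residue `r_j(λ) = (λ + ϑ, ε_j)`. -/
def res (pb : Fin (n + 1) → ZMod 2) (l : Fin (n + 1) → ℤ) (j : Fin (n + 1)) : ℤ :=
  sg pb j * (l j + theta pb j)

/-- `ρ = ϑ + ∑_{i : p̄_i = 0} ε_i`, coordinatewise. -/
def rho (pb : Fin (n + 1) → ZMod 2) (k : Fin (n + 1)) : ℤ :=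
  theta pb k + (if pb k = 0 then 1 else 0)

/-- `l(λ) = ∑ λ_i`. -/
def ell (l : Fin (n + 1) → ℤ) : ℤ := ∑ i, l i

/-- The central character value `Z_r(λ)`. -/
def Zint (pb : Fin (n + 1) → ZMod 2) (r : ℕ) (l : Fin (n + 1) → ℤ) : ℤ :=
  ∑ s ∈ Finset.Icc 1 r, (-1 : ℤ) ^ (s - 1) *
    ∑ K ∈ Finset.powersetCard s (Finset.univ : Finset (Fin (n + 1))),
      ∑ a ∈ Fintype.piFinset (fun _ : Fin (n + 1) => Finset.range (r + 2)),
        if (∑ k ∈ K, a k) = r - s + 1 ∧ (∀ k, k ∉ K → a k = 0) then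
          (∏ k ∈ K, sg pb k) * ∏ k ∈ K, res pb l k ^ a k
        else 0

/-- `A_r(λ) = #{i : r_i(λ+ε_i) ≡ r (mod p)}`. -/
def Acount (pb : Fin (n + 1) → ZMod 2) (p : ℕ) (r : ZMod p) (l : Fin (n + 1) → ℤ) : ℕ :=
  (Finset.univ.filter fun i : Fin (n + 1) => ((res pb (l + eps i) i : ℤ) : ZMod p) = r).card

/-- `B_r(λ) = #{i : r_i(λ) ≡ r (mod p)}`. -/
def Bcount (pb : Fin (n + 1) → ZMod 2) (p : ℕ) (r : ZMod p) (l : Fin (n + 1) → ℤ) : ℕ :=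
  (Finset.univ.filter fun i : Fin (n + 1) => ((res pb l i : ℤ) : ZMod p) = r).card

/-- For `p = 0`: `γ_a` is the basis element `single a 1` of the free module `ℤ →₀ ℤ`. -/
noncomputable def gamma0 (a : ℤ) : ℤ →₀ ℤ := Finsupp.single a 1

/-- `wt` for `p = 0`, with values in the free `ℤ`-module on basis `{γ_a : a ∈ ℤ}`. -/
noncomputable def wt0 (pb : Fin (n + 1) → ZMod 2) (l : Fin (n + 1) → ℤ) : ℤ →₀ ℤ :=
  ∑ i : Fin (n + 1), sg pb i • gamma0 (sg pb i * (l i + rho pb i))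

/-- `Λ_r ∈ P = ℤδ ⊕ ⊕_{r ∈ ℤ/pℤ} ℤΛ_r`. -/
def LamP (p : ℕ) (r : ZMod p) : ℤ × (ZMod p → ℤ) := (0, fun s => if s = r then 1 else 0)

/-- `δ ∈ P`. -/
def delP (p : ℕ) : ℤ × (ZMod p → ℤ) := (1, 0)

/-- `γ_a = Λ_{s mod p} − Λ_{(s−1) mod p} − d·δ`, where `a = p·d + s` with `1 ≤ s ≤ p`. -/
def gammaP (p : ℕ) (a : ℤ) : ℤ × (ZMod p → ℤ) :=
  LamP p (((a - 1) % (p : ℤ) + 1 : ℤ) : ZMod p) - LamP p (((a - 1) % (p : ℤ) : ℤ) : ZMod p) -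
    ((a - 1) / (p : ℤ)) • delP p

/-- `wt` for prime `p`. -/
def wtP (p : ℕ) (pb : Fin (n + 1) → ZMod 2) (l : Fin (n + 1) → ℤ) : ℤ × (ZMod p → ℤ) :=
  ∑ i : Fin (n + 1), sg pb i • gammaP p (sg pb i * (l i + rho pb i))

/-- Entry `i` of the `r`-signature of `λ`: `1` codes `+`, `-1` codes `−`, `0` codes `0`. -/
def sig (pb : Fin (n + 1) → ZMod 2) (p : ℕ) (r : ZMod p) (l : Fin (n + 1) → ℤ)
    (i : Fin (n + 1)) : ℤ :=
  if ((res pb (l + eps i) i : ℤ) : ZMod p) = r then 1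
  else if ((res pb l i : ℤ) : ZMod p) = r then -1
  else 0

/-- Number of `−`'s of the `r`-signature of `λ` in positions `[i..j]`. -/
noncomputable def nM (pb : Fin (n + 1) → ZMod 2) (p : ℕ) (r : ZMod p) (l : Fin (n + 1) → ℤ)
    (i j : Fin (n + 1)) : ℕ :=
  Set.ncard {k : Fin (n + 1) | k ∈ Finset.Icc i j ∧ sig pb p r l k = -1}

/-- Number of `+`'s of the `r`-signature of `λ` in positions `[i..j]`. -/
noncomputable def nP (pb : Fin (n + 1) → ZMod 2) (p : ℕ) (r : ZMod p) (l : Fin (n + 1) → ℤ)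
    (i j : Fin (n + 1)) : ℕ :=
  Set.ncard {k : Fin (n + 1) | k ∈ Finset.Icc i j ∧ sig pb p r l k = 1}

/-- `i` is the position of a `−` in the reduced `r`-signature of `λ` (i.e. `i` is
`r`-normal for `λ`): the `−` at `i` is never cancelled, which happens exactly when every
interval `[i..j]` contains strictly more `−`'s than `+`'s. -/
def RMinus (pb : Fin (n + 1) → ZMod 2) (p : ℕ) (r : ZMod p) (l : Fin (n + 1) → ℤ)
    (i : Fin (n + 1)) : Prop :=
  sig pb p r l i = -1 ∧ ∀ j : Fin (n + 1), i ≤ j → nP pb p r l i j < nM pb p r l i j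

/-- `i` is the position of a `+` in the reduced `r`-signature of `λ` (i.e. `i` is
`r`-conormal for `λ`). -/
def RPlus (pb : Fin (n + 1) → ZMod 2) (p : ℕ) (r : ZMod p) (l : Fin (n + 1) → ℤ)
    (i : Fin (n + 1)) : Prop :=
  sig pb p r l i = 1 ∧ ∀ j : Fin (n + 1), j ≤ i → nM pb p r l j i < nP pb p r l j i

/-- `i` is the position of the leftmost `−` in the reduced `r`-signature (`r`-good). -/
def RGood (pb : Fin (n + 1) → ZMod 2) (p : ℕ) (r : ZMod p) (l : Fin (n + 1) → ℤ)
    (i : Fin (n + 1)) : Prop :=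
  RMinus pb p r l i ∧ ∀ j : Fin (n + 1), j < i → ¬ RMinus pb p r l j

/-- `i` is the position of the rightmost `+` in the reduced `r`-signature (`r`-cogood). -/
def RCogood (pb : Fin (n + 1) → ZMod 2) (p : ℕ) (r : ZMod p) (l : Fin (n + 1) → ℤ)
    (i : Fin (n + 1)) : Prop :=
  RPlus pb p r l i ∧ ∀ j : Fin (n + 1), i < j → ¬ RPlus pb p r l j

open Classical in
/-- The crystal operator `ẽ*_r`, with `none` playing the role of `0`. -/
noncomputable def eStar (pb : Fin (n + 1) → ZMod 2) (p : ℕ) (r : ZMod p)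
    (l : Fin (n + 1) → ℤ) : Option (Fin (n + 1) → ℤ) :=
  if h : (Finset.univ.filter (RMinus pb p r l)).Nonempty then
    some (l - eps ((Finset.univ.filter (RMinus pb p r l)).min' h))
  else none

open Classical in
/-- The crystal operator `f̃*_r`, with `none` playing the role of `0`. -/
noncomputable def fStar (pb : Fin (n + 1) → ZMod 2) (p : ℕ) (r : ZMod p)
    (l : Fin (n + 1) → ℤ) : Option (Fin (n + 1) → ℤ) :=
  if h : (Finset.univ.filter (RPlus pb p r l)).Nonempty then
    some (l + eps ((Finset.univ.filter (RPlus pb p r l)).max' h))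
  else none

/-- `A ↓ B`: there is an injection `θ : A → B` with `θ a ≤ a` for all `a ∈ A`. -/
def Down (A B : Finset (Fin (n + 1))) : Prop :=
  ∃ θ : Fin (n + 1) → Fin (n + 1), Set.InjOn θ ↑A ∧ ∀ a ∈ A, θ a ∈ B ∧ θ a ≤ a

/-- `C_{i,j}(λ) = {h ∈ (i..j) : c_{i,h}(λ) ≡ 0 (mod p)}`. -/
def Cset (pb : Fin (n + 1) → ZMod 2) (p : ℕ) (l : Fin (n + 1) → ℤ) (i j : Fin (n + 1)) :
    Finset (Fin (n + 1)) :=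
  (Finset.Ioo i j).filter fun h => ((res pb l i - res pb l h : ℤ) : ZMod p) = 0

/-- `B_{i,j}(λ) = {h ∈ [i..j) : b_{i,h}(λ) ≡ 0 (mod p)}`. -/
def Bset (pb : Fin (n + 1) → ZMod 2) (p : ℕ) (l : Fin (n + 1) → ℤ) (i j : Fin (n + 1)) :
    Finset (Fin (n + 1)) :=
  (Finset.Ico i j).filter fun h =>
    ((res pb l i - res pb (l + eps (h + 1)) (h + 1) : ℤ) : ZMod p) = 0

/-- The opposite parity sequence `p̄′_k = p̄_{w₀ k} + 1̄`, where `w₀ k = N + 1 − k`. -/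
def pbRev (pb : Fin (n + 1) → ZMod 2) : Fin (n + 1) → ZMod 2 := fun k => pb k.rev + 1

/-- `s̃ : ℤ^N → ℤ^N`, `(s̃ λ)_{w₀ i} = −λ_i`. -/
def stilde (l : Fin (n + 1) → ℤ) : Fin (n + 1) → ℤ := fun k => -l k.rev

/-- `(i, j)` is an `r`-canceling pair for `λ` (for `i < j`). -/
def CPair (pb : Fin (n + 1) → ZMod 2) (p : ℕ) (r : ZMod p) (l : Fin (n + 1) → ℤ)
    (i j : Fin (n + 1)) : Prop :=
  sig pb p r l i = -1 ∧ sig pb p r l j = 1 ∧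
    ∀ k : Fin (n + 1), i < k → k < j → sig pb p r l k = 0

/-- `(i i+1)·λ`: interchange coordinates `i` and `i+1`. -/
def swapL (i : Fin (n + 1)) (l : Fin (n + 1) → ℤ) : Fin (n + 1) → ℤ :=
  fun k => if k = i then l (i + 1) else if k = i + 1 then l i else l k

/-- The parity sequence obtained from `pb` by interchanging entries `i` and `i+1`. -/
def pbSwap (pb : Fin (n + 1) → ZMod 2) (i : Fin (n + 1)) : Fin (n + 1) → ZMod 2 :=
  fun k => if k = i then pb (i + 1) else if k = i + 1 then pb i else pb k

/-- The odd reflection `s_i` on `X(T)`. -/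
def sI (pb : Fin (n + 1) → ZMod 2) (p : ℕ) (i : Fin (n + 1)) (l : Fin (n + 1) → ℤ) :
    Fin (n + 1) → ℤ :=
  if ((sg pb i * l i - sg pb (i + 1) * l (i + 1) : ℤ) : ZMod p) = 0 then swapL i l
  else swapL i l + eps i - eps (i + 1)

/-!
Reading `s̃ λ` with respect to `p̄′` is reading `λ` backwards: with `S = ∑ᵢ (−1)^{p̄ᵢ}`,
`r′_k(s̃ λ) = r_{w₀ k}(λ + ε_{w₀ k}) − S` and `r′_k(s̃ λ + ε_k) = r_{w₀ k}(λ) − S`.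
So the `r`-signature of `s̃ λ` is the `(r + S)`-signature of `λ` reversed, with `+` and `−`
exchanged (the two cases of a signature entry are exclusive because `1 ≠ 0` in `ℤ/pℤ`).
Reversal with this exchange turns cancelling pairs into cancelling pairs, hence the leftmost
uncancelled `−` into the rightmost uncancelled `+`.
-/

def sdim (pb : Fin (n + 1) → ZMod 2) : ℤ := ∑ i, sg pb i

lemma sg_pbRev (pb : Fin (n + 1) → ZMod 2) (k : Fin (n + 1)) :
    sg (pbRev pb) k = -sg pb k.rev := by
  have key : ∀ x : ZMod 2, (if x + 1 = 0 then (1 : ℤ) else -1) = -if x = 0 then 1 else -1 := by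
    decide
  exact key (pb k.rev)

lemma sg_mul_self (pb : Fin (n + 1) → ZMod 2) (j : Fin (n + 1)) : sg pb j * sg pb j = 1 := by
  unfold sg; split_ifs <;> norm_num

lemma intCast_sg_ne_zero {p : ℕ} (hp : p ≠ 1) (pb : Fin (n + 1) → ZMod 2) (j : Fin (n + 1)) :
    ((sg pb j : ℤ) : ZMod p) ≠ 0 := by
  unfold sg; split_ifs <;> simp [ZMod.one_eq_zero_iff, hp]

lemma res_add_eps (pb : Fin (n + 1) → ZMod 2) (l : Fin (n + 1) → ℤ) (i : Fin (n + 1)) :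
    res pb (l + eps i) i = res pb l i + sg pb i := by
  simp only [res, eps, Pi.add_apply, ↓reduceIte]
  ring

lemma intCast_res_add_eps_ne {p : ℕ} (hp : p ≠ 1) (pb : Fin (n + 1) → ZMod 2)
    (l : Fin (n + 1) → ℤ) (i : Fin (n + 1)) :
    ((res pb (l + eps i) i : ℤ) : ZMod p) ≠ ((res pb l i : ℤ) : ZMod p) := by
  rw [res_add_eps, Int.cast_add, Ne, add_eq_left]
  exact intCast_sg_ne_zero hp pb i

lemma theta_pbRev_add_theta_rev (pb : Fin (n + 1) → ZMod 2) (k : Fin (n + 1)) :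
    theta (pbRev pb) k + theta pb k.rev = sdim pb * sg pb k.rev - 1 := by
  have hrev : theta (pbRev pb) k = ∑ i ∈ Iio k.rev, sg pb i * sg pb k.rev := by
    rw [theta, ← Fin.finsetImage_rev_Ioi, sum_image Fin.rev_injective.injOn]
    simp only [sg_pbRev, neg_mul_neg]
  rw [hrev, theta, add_comm, ← sum_disjUnion (disjoint_Ioi_Iio _), Ioi_disjUnion_Iio, sdim, sum_mul,
    ← sum_compl_add_sum {k.rev}, sum_singleton, sg_mul_self, add_sub_cancel_right]

lemma res_pbRev_stilde (pb : Fin (n + 1) → ZMod 2) (lam : Fin (n + 1) → ℤ) (k : Fin (n + 1)) :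
    res (pbRev pb) (stilde lam) k = res pb (lam + eps k.rev) k.rev - sdim pb := by
  have htheta := theta_pbRev_add_theta_rev pb k
  have hsq := sg_mul_self pb k.rev
  rw [res_add_eps]
  simp only [res, stilde, sg_pbRev]
  linear_combination (-sg pb k.rev) * htheta - sdim pb * hsq

lemma res_pbRev_stilde_add_eps (pb : Fin (n + 1) → ZMod 2) (lam : Fin (n + 1) → ℤ)
    (k : Fin (n + 1)) :
    res (pbRev pb) (stilde lam + eps k) k = res pb lam k.rev - sdim pb := by
  rw [res_add_eps, res_pbRev_stilde, sg_pbRev, res_add_eps]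
  ring

lemma sig_pbRev_stilde {p : ℕ} (hp : p ≠ 1) (pb : Fin (n + 1) → ZMod 2)
    (lam : Fin (n + 1) → ℤ) (r : ZMod p) (k : Fin (n + 1)) :
    sig (pbRev pb) p r (stilde lam) k = -sig pb p (r + sdim pb) lam k.rev := by
  have hplus : ((res (pbRev pb) (stilde lam + eps k) k : ℤ) : ZMod p) = r ↔
      ((res pb lam k.rev : ℤ) : ZMod p) = r + sdim pb := by
    rw [res_pbRev_stilde_add_eps, Int.cast_sub, sub_eq_iff_eq_add]
  have hminus : ((res (pbRev pb) (stilde lam) k : ℤ) : ZMod p) = r ↔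
      ((res pb (lam + eps k.rev) k.rev : ℤ) : ZMod p) = r + sdim pb := by
    rw [res_pbRev_stilde, Int.cast_sub, sub_eq_iff_eq_add]
  have hexcl := intCast_res_add_eps_ne hp pb lam k.rev
  simp only [sig, hplus, hminus]
  split_ifs <;> simp_all

lemma ncard_Icc_filter_rev (P : Fin (n + 1) → Prop) (i j : Fin (n + 1)) :
    {k | k ∈ Icc i j ∧ P k.rev}.ncard = {k | k ∈ Icc j.rev i.rev ∧ P k}.ncard := by
  rw [← Set.ncard_preimage_of_injective_subset_range Fin.rev_injective
    (Fin.rev_surjective.range_eq ▸ Set.subset_univ _)]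
  congr 1
  ext k
  simp only [Set.mem_preimage, Set.mem_ofPred_eq, mem_Icc, Fin.rev_rev, Fin.le_rev_iff,
    Fin.rev_le_iff, and_comm (a := j.rev ≤ k)]

lemma nM_pbRev_stilde {p : ℕ} (hp : p ≠ 1) (pb : Fin (n + 1) → ZMod 2)
    (lam : Fin (n + 1) → ℤ) (r : ZMod p) (i j : Fin (n + 1)) :
    nM (pbRev pb) p r (stilde lam) i j = nP pb p (r + sdim pb) lam j.rev i.rev := by
  unfold nM nP
  simp_rw [sig_pbRev_stilde hp, neg_eq_iff_eq_neg, neg_neg]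
  exact ncard_Icc_filter_rev (sig pb p (r + sdim pb) lam · = 1) i j

lemma nP_pbRev_stilde {p : ℕ} (hp : p ≠ 1) (pb : Fin (n + 1) → ZMod 2)
    (lam : Fin (n + 1) → ℤ) (r : ZMod p) (i j : Fin (n + 1)) :
    nP (pbRev pb) p r (stilde lam) i j = nM pb p (r + sdim pb) lam j.rev i.rev := by
  unfold nM nP
  simp_rw [sig_pbRev_stilde hp, neg_eq_iff_eq_neg]
  exact ncard_Icc_filter_rev (sig pb p (r + sdim pb) lam · = -1) i j

lemma rPlus_pbRev_stilde_iff {p : ℕ} (hp : p ≠ 1) (pb : Fin (n + 1) → ZMod 2)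
    (lam : Fin (n + 1) → ℤ) (r : ZMod p) (k : Fin (n + 1)) :
    RPlus (pbRev pb) p r (stilde lam) k ↔ RMinus pb p (r + sdim pb) lam k.rev := by
  rw [RPlus, RMinus, sig_pbRev_stilde hp, neg_eq_iff_eq_neg]
  refine and_congr_right' (Fin.revPerm.forall_congr fun j => ?_)
  rw [nM_pbRev_stilde hp, nP_pbRev_stilde hp, Fin.revPerm_apply, Fin.rev_le_rev]

lemma rCogood_pbRev_stilde_rev_iff {p : ℕ} (hp : p ≠ 1) (pb : Fin (n + 1) → ZMod 2)
    (lam : Fin (n + 1) → ℤ) (r : ZMod p) (t : Fin (n + 1)) :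
    RCogood (pbRev pb) p r (stilde lam) t.rev ↔ RGood pb p (r + sdim pb) lam t := by
  rw [RCogood, RGood, rPlus_pbRev_stilde_iff hp, Fin.rev_rev]
  refine and_congr_right' (Fin.revPerm.forall_congr fun j => ?_)
  rw [rPlus_pbRev_stilde_iff hp, Fin.revPerm_apply, Fin.rev_lt_iff]

/-- `t` is good for `λ` (w.r.t. `p̄`) iff `w₀ t` is cogood for `s̃ λ`
(w.r.t. the opposite parity sequence `p̄′`). -/
theorem statement11 (p : ℕ) (hp : p = 0 ∨ p.Prime) (pb : Fin (n + 1) → ZMod 2)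
    (lam : Fin (n + 1) → ℤ) (t : Fin (n + 1)) :
    (∃ r : ZMod p, RGood pb p r lam t) ↔
      (∃ r : ZMod p, RCogood (pbRev pb) p r (stilde lam) t.rev) := by
  have hp1 : p ≠ 1 := by
    rintro rfl
    exact hp.elim one_ne_zero Nat.not_prime_one
  simp_rw [rCogood_pbRev_stilde_rev_iff hp1]
  exact ⟨fun ⟨r, hr⟩ => ⟨r - sdim pb, by rwa [sub_add_cancel]⟩, fun ⟨_, hr⟩ => ⟨_, hr⟩⟩

end Kujawa
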